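/- Let 0 < s = t be integers (a vertex of type 10^0). Let M be the matrix with rows (1, 0, 0), (x, 1, 0), (y, 0, 1), where x ∈ 𝒫/𝒫^{s} and y ∈ 𝒫/𝒫^{t}. Then M represents a γ-fixed point at the vertex (s,t) if and only if v(x) ≥ s − m and v(y) ≥ t − m. -/

import Mathlib

/-!
With g = M·x_{(s,t)} invertible, the fixed-point equation γ·g = g·C forces C = g⁻¹γg, and an
explicit computation gives
g⁻¹γg = [[u₁, 0, 0], [(u₂ - u₁)x/π^s, u₂, 0], [(u₃ - u₁)y/π^t, 0, u₃]].
Its diagonal consists of units, so it lies in GL₃(𝒪) exactly when the two off-diagonal entries are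
integral; since v(u₂ - u₁) = v(u₃ - u₁) = m this means v(x) ≥ s - m and v(y) ≥ t - m.
-/

noncomputable section

/-- The element π of F = K((π)). -/
def pp (K : Type*) [Field K] : LaurentSeries K := HahnSeries.single (1 : ℤ) (1 : K)

/-- The π-adic valuation on F = K((π)), with v(0) = ⊤. -/
def vv {K : Type*} [Field K] (x : LaurentSeries K) : WithTop ℤ := x.orderTop

/-- x ∈ 𝒫^r, i.e. v(x) ≥ r. -/
def inP {K : Type*} [Field K] (r : ℤ) (x : LaurentSeries K) : Prop := (r : WithTop ℤ) ≤ vv x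

/-- x ∈ 𝒫^r/𝒫^{r'} : x is a polynomial x_r π^r + ⋯ + x_{r'-1} π^{r'-1} (possibly 0). -/
def inPQ {K : Type*} [Field K] (r r' : ℤ) (x : LaurentSeries K) : Prop :=
  inP r x ∧ ∀ i : ℤ, r' ≤ i → x.coeff i = 0

/-- Membership in GL₃(𝒪): entries in 𝒪 and determinant a unit of 𝒪. -/
def inGLO {K : Type*} [Field K] (C : Matrix (Fin 3) (Fin 3) (LaurentSeries K)) : Prop :=
  (∀ i j, inP 0 (C i j)) ∧ vv C.det = 0

/-- The matrix x_{(s,t)} = diag(1, π^s, π^t). -/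
def xst (K : Type*) [Field K] (s t : ℤ) : Matrix (Fin 3) (Fin 3) (LaurentSeries K) :=
  Matrix.diagonal ![1, pp K ^ s, pp K ^ t]

/-- Membership in the subgroup I^a of GL₃(F). -/
def inIa {K : Type*} [Field K] (a : ℤ) (g : Matrix (Fin 3) (Fin 3) (LaurentSeries K)) : Prop :=
  g.det ≠ 0 ∧
  vv (g 0 0) = 0 ∧ vv (g 1 1) = 0 ∧ vv (g 2 2) = 0 ∧
  inP (-a) (g 0 1) ∧ inP (-a) (g 0 2) ∧ inP 0 (g 1 2) ∧
  inP (a + 1) (g 1 0) ∧ inP (a + 1) (g 2 0) ∧ inP 1 (g 2 1)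

/-- Membership in x_{(s,t)}·GL₃(𝒪)·x_{(s,t)}⁻¹. -/
def inConj {K : Type*} [Field K] (s t : ℤ) (g : Matrix (Fin 3) (Fin 3) (LaurentSeries K)) : Prop :=
  ∃ C, inGLO C ∧ g = xst K s t * C * (xst K s t)⁻¹

/-- M represents a γ-fixed point at the vertex (s,t): there is C ∈ GL₃(𝒪) with
γ·M·x_{(s,t)} = M·x_{(s,t)}·C. -/
def reprFixed {K : Type*} [Field K] (γ M : Matrix (Fin 3) (Fin 3) (LaurentSeries K))
    (s t : ℤ) : Prop :=
  ∃ C, inGLO C ∧ γ * (M * xst K s t) = M * xst K s t * C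

section Valuation

variable {K : Type*} [Field K]

theorem vv_mul (a b : LaurentSeries K) : vv (a * b) = vv a + vv b :=
  HahnSeries.orderTop_mul a b

theorem ne_zero_of_vv_eq_zero {a : LaurentSeries K} (ha : vv a = 0) : a ≠ 0 := by
  rintro rfl
  simp [vv] at ha

theorem vv_pp_zpow (s : ℤ) : vv (pp K ^ s) = s := by
  rw [vv, pp, ← RatFunc.single_zpow, HahnSeries.orderTop_single one_ne_zero]

theorem pp_ne_zero : pp K ≠ 0 := by
  simp [pp]

theorem vv_sub_eq_vv_one_sub_div {a b : LaurentSeries K} (hb : vv b = 0) :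
    vv (b - a) = vv (1 - a / b) := by
  have hb0 := ne_zero_of_vv_eq_zero hb
  rw [show b - a = b * (1 - a / b) by field_simp, vv_mul, hb, zero_add]

theorem inP_zero_of_vv_eq_zero {a : LaurentSeries K} (ha : vv a = 0) : inP 0 a := by
  simp [inP, ha]

theorem inP_zero_mul_mul_pp_zpow_neg_iff {c x : LaurentSeries K} {m : ℤ} (hc : vv c = m)
    (s : ℤ) : inP 0 (c * x * pp K ^ (-s)) ↔ ((s - m : ℤ) : WithTop ℤ) ≤ vv x := by
  rw [inP, vv_mul, vv_mul, hc, vv_pp_zpow]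
  induction vv x using WithTop.recTopCoe with
  | top => simp
  | coe a => norm_cast; omega

end Valuation

section Matrix

variable {K : Type*} [Field K]

theorem reprFixed_iff_of_mul_eq {γ M C₀ : Matrix (Fin 3) (Fin 3) (LaurentSeries K)} {s t : ℤ}
    (hdet : (M * xst K s t).det ≠ 0) (hC₀ : γ * (M * xst K s t) = M * xst K s t * C₀) :
    reprFixed γ M s t ↔ inGLO C₀ := by
  have hunit : IsUnit (M * xst K s t) :=
    (Matrix.isUnit_iff_isUnit_det _).mpr (isUnit_iff_ne_zero.mpr hdet)
  constructor
  · rintro ⟨C, hC, hγ⟩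
    rwa [hunit.mul_left_cancel (hγ.symm.trans hC₀)] at hC
  · exact fun h => ⟨C₀, h, hC₀⟩

theorem inGLO_lowerArrow_iff {a b c d e : LaurentSeries K} (ha : vv a = 0) (hc : vv c = 0)
    (he : vv e = 0) : inGLO !![a, 0, 0; b, c, 0; d, 0, e] ↔ inP 0 b ∧ inP 0 d := by
  have hdet : vv (!![a, 0, 0; b, c, 0; d, 0, e] : Matrix (Fin 3) (Fin 3) _).det = 0 := by
    rw [Matrix.det_fin_three]
    simp [vv_mul, ha, hc, he]
  have h0 : inP 0 (0 : LaurentSeries K) := by simp [inP, vv]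
  refine ⟨fun h => ⟨h.1 1 0, h.1 2 0⟩, fun ⟨hb, hd⟩ => ⟨fun i j => ?_, hdet⟩⟩
  fin_cases i <;> fin_cases j <;>
    simp [inP_zero_of_vv_eq_zero, ha, hc, he, hb, hd, h0]

theorem unipotent_mul_xst (s t : ℤ) (x y : LaurentSeries K) :
    !![1, 0, 0; x, 1, 0; y, 0, 1] * xst K s t = !![1, 0, 0; x, pp K ^ s, 0; y, 0, pp K ^ t] := by
  simp [xst, Matrix.diagonal_vec3]

theorem det_unipotent_mul_xst_ne_zero (s t : ℤ) (x y : LaurentSeries K) :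
    (!![1, 0, 0; x, 1, 0; y, 0, 1] * xst K s t).det ≠ 0 := by
  rw [unipotent_mul_xst]
  simp [Matrix.det_fin_three, zpow_ne_zero, pp_ne_zero]

theorem diagonal_mul_unipotent_mul_xst (u₁ u₂ u₃ x y : LaurentSeries K) (s t : ℤ) :
    Matrix.diagonal ![u₁, u₂, u₃] * (!![1, 0, 0; x, 1, 0; y, 0, 1] * xst K s t) =
      !![1, 0, 0; x, 1, 0; y, 0, 1] * xst K s t *
        !![u₁, 0, 0; (u₂ - u₁) * x * pp K ^ (-s), u₂, 0; (u₃ - u₁) * y * pp K ^ (-t), 0, u₃] := by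
  rw [unipotent_mul_xst, Matrix.diagonal_vec3]
  ext i j : 1
  fin_cases i <;> fin_cases j <;> simp [Matrix.mul_apply, Fin.sum_univ_three] <;>
    field_simp [zpow_ne_zero, pp_ne_zero] <;> ring

end Matrix

theorem stmt11_general (K : Type*) [Field K]
    (u₁ u₂ u₃ : LaurentSeries K) (m : ℤ)
    (hu₁ : vv u₁ = 0) (hu₂ : vv u₂ = 0) (hu₃ : vv u₃ = 0)
    (hv₁₂ : vv (1 - u₁ / u₂) = (m : WithTop ℤ))
    (hv₁₃ : vv (1 - u₁ / u₃) = (m : WithTop ℤ))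
    (s t : ℤ)
    (x y : LaurentSeries K) :
    reprFixed (Matrix.diagonal ![u₁, u₂, u₃]) !![1, 0, 0; x, 1, 0; y, 0, 1] s t ↔
      (((s - m : ℤ) : WithTop ℤ) ≤ vv x ∧ ((t - m : ℤ) : WithTop ℤ) ≤ vv y) := by
  rw [reprFixed_iff_of_mul_eq (det_unipotent_mul_xst_ne_zero s t x y)
      (diagonal_mul_unipotent_mul_xst u₁ u₂ u₃ x y s t),
    inGLO_lowerArrow_iff hu₁ hu₂ hu₃,
    inP_zero_mul_mul_pp_zpow_neg_iff ((vv_sub_eq_vv_one_sub_div hu₂).trans hv₁₂),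
    inP_zero_mul_mul_pp_zpow_neg_iff ((vv_sub_eq_vv_one_sub_div hu₃).trans hv₁₃)]

theorem stmt11 (K : Type*) [Field K]
    (u₁ u₂ u₃ : LaurentSeries K) (m n : ℤ)
    (hu₁ : vv u₁ = 0) (hu₂ : vv u₂ = 0) (hu₃ : vv u₃ = 0)
    (h₁₂ : u₁ ≠ u₂) (h₁₃ : u₁ ≠ u₃) (h₂₃ : u₂ ≠ u₃)
    (hm : 0 ≤ m) (hmn : m ≤ n)
    (hv₁₂ : vv (1 - u₁ / u₂) = (m : WithTop ℤ))
    (hv₁₃ : vv (1 - u₁ / u₃) = (m : WithTop ℤ))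
    (hv₂₃ : vv (1 - u₂ / u₃) = (n : WithTop ℤ))
    (s t : ℤ) (hs : 0 < s) (hst : s = t)
    (x y : LaurentSeries K) (hx : inPQ 1 s x) (hy : inPQ 1 t y) :
    reprFixed (Matrix.diagonal ![u₁, u₂, u₃]) !![1, 0, 0; x, 1, 0; y, 0, 1] s t ↔
      (((s - m : ℤ) : WithTop ℤ) ≤ vv x ∧ ((t - m : ℤ) : WithTop ℤ) ≤ vv y) :=
  stmt11_general K u₁ u₂ u₃ m hu₁ hu₂ hu₃ hv₁₂ hv₁₃ s t x y
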